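/- arXiv:1911.11016 — 3 statements merged into one kernel-verified Lean document; each statement's English description precedes it below -/
import Mathlib

section
/- Let 0 → M → N → P → 0 be a short exact sequence of persistence modules over a field k (meaning the maps are natural transformations and for every s ∈ ℝ the sequence 0 → M(s) → N(s) → P(s) → 0 of k-vector spaces is exact). Suppose M ≅ ⊕_{i=1}^{m} k[a_i, b_i), N ≅ ⊕_{j=1}^{n} k[c_j, d_j) and P ≅ ⊕_{l=1}^{p} k[e_l, f_l) are finite direct sums of interval modules (left endpoints in ℝ, right endpoints in (left endpoint, ∞]). Then Σ_{j=1}^{n} (e^{−c_j} − e^{−d_j}) = Σ_{i=1}^{m} (e^{−a_i} − e^{−b_i}) + Σ_{l=1}^{p} (e^{−e_l} − e^{−f_l}), with the convention e^{−∞} = 0; that is, persistent magnitude is additive with respect to short exact sequences: |N| = |M| + |P|. -/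
open scoped BigOperators Classical

/-- A persistence module over the field `k`: a functor from `(ℝ, ≤)` to
`k`-vector spaces. -/
structure PersMod (k : Type) [Field k] : Type 1 where
  V : ℝ → Type
  [acg : ∀ s, AddCommGroup (V s)]
  [mod : ∀ s, Module k (V s)]
  map : ∀ {s s' : ℝ}, s ≤ s' → (V s →ₗ[k] V s')
  map_refl : ∀ (s : ℝ) (x : V s), map (le_refl s) x = x
  map_trans : ∀ {s s' s'' : ℝ} (h : s ≤ s') (h' : s' ≤ s'') (x : V s),
    map h' (map h x) = map (h.trans h') x

attribute [instance] PersMod.acg PersMod.mod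

/-- Isomorphism of persistence modules: a family of linear equivalences
commuting with the structure maps. -/
def PersIso {k : Type} [Field k] (M N : PersMod k) : Prop :=
  ∃ e : ∀ s : ℝ, M.V s ≃ₗ[k] N.V s,
    ∀ (s s' : ℝ) (h : s ≤ s') (x : M.V s), e s' (M.map h x) = N.map h (e s x)

/-- The value of the interval module `k[a,b)` at `s`, as a submodule of `k`:
all of `k` if `a ≤ s < b`, and `0` otherwise. -/
noncomputable def intervalSub (k : Type) [Field k] (a : ℝ) (b : WithTop ℝ) (s : ℝ) :
    Submodule k k :=
  if a ≤ s ∧ (s : WithTop ℝ) < b then ⊤ else ⊥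

/-- The structure map of the interval module `k[a,b)`. -/
noncomputable def intervalMap (k : Type) [Field k] (a : ℝ) (b : WithTop ℝ)
    {s s' : ℝ} (_h : s ≤ s') :
    intervalSub k a b s →ₗ[k] intervalSub k a b s' where
  toFun x := ⟨if a ≤ s' ∧ (s' : WithTop ℝ) < b then (x : k) else 0, by
    unfold intervalSub; split_ifs with h' <;>
      first | exact Submodule.mem_top | exact (Submodule.mem_bot k).2 rfl⟩
  map_add' x y := by
    apply Subtype.ext
    simp only [Submodule.coe_add]
    split_ifs <;> simp
  map_smul' c x := by
    apply Subtype.ext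
    simp only [Submodule.coe_smul, RingHom.id_apply]
    split_ifs <;> simp [mul_comm]

lemma intervalSub_eq_zero {k : Type} [Field k] {a : ℝ} {b : WithTop ℝ} {s : ℝ}
    (h : ¬(a ≤ s ∧ (s : WithTop ℝ) < b)) (x : intervalSub k a b s) : (x : k) = 0 := by
  have e : intervalSub k a b s = ⊥ := by unfold intervalSub; exact if_neg h
  have hx : (x : k) ∈ (⊥ : Submodule k k) := e ▸ x.2
  exact (Submodule.mem_bot k).1 hx

/-- The finitely presented persistence module `⊕_i k[a i, b i)` with the given
barcode. -/
noncomputable def barcodeMod (k : Type) [Field k] {m : ℕ}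
    (a : Fin m → ℝ) (b : Fin m → WithTop ℝ) : PersMod k where
  V s := ∀ i : Fin m, intervalSub k (a i) (b i) s
  map h := LinearMap.pi fun i => (intervalMap k (a i) (b i) h).comp (LinearMap.proj i)
  map_refl s x := by
    funext i
    apply Subtype.ext
    simp only [LinearMap.pi_apply, LinearMap.comp_apply, LinearMap.proj_apply, intervalMap,
      LinearMap.coe_mk, AddHom.coe_mk]
    split_ifs with h
    · rfl
    · exact (intervalSub_eq_zero h (x i)).symm
  map_trans {s s' s''} h h' x := by
    funext i
    apply Subtype.ext
    simp only [LinearMap.pi_apply, LinearMap.comp_apply, LinearMap.proj_apply, intervalMap,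
      LinearMap.coe_mk, AddHom.coe_mk]
    split_ifs with h1 h2
    · rfl
    · -- s'' in interval, s' not in interval; then s not in interval either
      have hs : ¬(a i ≤ s ∧ (s : WithTop ℝ) < b i) := by
        intro hs
        exact h2 ⟨hs.1.trans h,
          lt_of_le_of_lt (show (s' : WithTop ℝ) ≤ (s'' : WithTop ℝ) by exact_mod_cast h') h1.2⟩
      exact (intervalSub_eq_zero hs (x i)).symm
    · rfl

/-- `e^{−b}` for an extended right endpoint `b ∈ ℝ ∪ {∞}`, with the convention
`e^{−∞} = 0`. -/
noncomputable def expE (b : WithTop ℝ) : ℝ :=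
  if h : b = ⊤ then 0 else Real.exp (-(b.untop h))

/-!
Persistent magnitude is an integral against the dimension function: the bar `[a, b)` contributes
`∫_a^b e^{-s} ds = e^{-a} - e^{-b}`, so `|M| = ∫ dim M(s) e^{-s} ds`. Dimension is additive on
short exact sequences of finite-dimensional vector spaces, pointwise in `s`, and integrating
gives `|N| = |M| + |P|`.
-/

open MeasureTheory Real Finset

theorem finrank_eq_add_of_shortExact {K V₁ V₂ V₃ : Type*} [DivisionRing K]
    [AddCommGroup V₁] [Module K V₁] [AddCommGroup V₂] [Module K V₂] [AddCommGroup V₃]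
    [Module K V₃] [FiniteDimensional K V₂] (f : V₁ →ₗ[K] V₂) (g : V₂ →ₗ[K] V₃)
    (hf : Function.Injective f) (hfg : LinearMap.range f = LinearMap.ker g)
    (hg : Function.Surjective g) :
    Module.finrank K V₂ = Module.finrank K V₁ + Module.finrank K V₃ := by
  have hker : Module.finrank K (LinearMap.ker g) = Module.finrank K V₁ := by
    rw [← hfg, LinearMap.finrank_range_of_inj hf]
  have hrange : Module.finrank K (LinearMap.range g) = Module.finrank K V₃ := by
    rw [LinearMap.range_eq_top.mpr hg, finrank_top]
  rw [← g.finrank_range_add_finrank_ker, hker, hrange, add_comm]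

/-- The support `[a, b)` of the interval module `k[a, b)`. -/
def bar (a : ℝ) (b : WithTop ℝ) : Set ℝ := {s | a ≤ s ∧ (s : WithTop ℝ) < b}

theorem bar_top (a : ℝ) : bar a ⊤ = Set.Ici a := by
  ext s; simp [bar]

theorem bar_coe (a c : ℝ) : bar a c = Set.Ico a c := by
  ext s; simp [bar]

theorem measurableSet_bar (a : ℝ) (b : WithTop ℝ) : MeasurableSet (bar a b) := by
  cases b with
  | top => rw [bar_top]; exact measurableSet_Ici
  | coe c => rw [bar_coe]; exact measurableSet_Ico

theorem integrable_indicator_bar_exp_neg (a : ℝ) (b : WithTop ℝ) :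
    Integrable ((bar a b).indicator fun s => exp (-s)) := by
  rw [integrable_indicator_iff (measurableSet_bar a b)]
  have hIci : IntegrableOn (fun s => exp (-s)) (Set.Ici a) := by
    rw [integrableOn_Ici_iff_integrableOn_Ioi]
    simpa using exp_neg_integrableOn_Ioi a one_pos
  exact hIci.mono_set fun s hs => hs.1

theorem integral_indicator_bar_exp_neg {a : ℝ} {b : WithTop ℝ} (hab : (a : WithTop ℝ) < b) :
    ∫ s, (bar a b).indicator (fun s => exp (-s)) s = exp (-a) - expE b := by
  rw [integral_indicator (measurableSet_bar a b)]
  cases b with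
  | top =>
    rw [bar_top, expE, dif_pos rfl, integral_Ici_eq_integral_Ioi, integral_exp_neg_Ioi, sub_zero]
  | coe c =>
    have hac : a ≤ c := (WithTop.coe_lt_coe.mp hab).le
    rw [bar_coe, integral_Ico_eq_integral_Ioo, ← integral_Ioc_eq_integral_Ioo,
      ← intervalIntegral.integral_of_le hac, intervalIntegral.integral_comp_neg fun x => exp x,
      integral_exp, expE, dif_neg WithTop.coe_ne_top, WithTop.untop_coe]

theorem finrank_intervalSub (k : Type) [Field k] (a : ℝ) (b : WithTop ℝ) (s : ℝ) :
    Module.finrank k (intervalSub k a b s) = if s ∈ bar a b then 1 else 0 := by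
  by_cases hs : s ∈ bar a b
  · rw [if_pos hs, intervalSub, if_pos (show a ≤ s ∧ (s : WithTop ℝ) < b from hs), finrank_top,
      Module.finrank_self]
  · rw [if_neg hs, intervalSub, if_neg (show ¬(a ≤ s ∧ (s : WithTop ℝ) < b) from hs), finrank_bot]

noncomputable def barcodeDim {m : ℕ} (a : Fin m → ℝ) (b : Fin m → WithTop ℝ) (s : ℝ) : ℕ :=
  #{i | s ∈ bar (a i) (b i)}

section Barcode

variable {m : ℕ} (a : Fin m → ℝ) (b : Fin m → WithTop ℝ)

theorem barcodeDim_mul_exp_neg (s : ℝ) :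
    (barcodeDim a b s : ℝ) * exp (-s) = ∑ i, (bar (a i) (b i)).indicator (fun s => exp (-s)) s := by
  rw [barcodeDim, Finset.card_filter, Nat.cast_sum, Finset.sum_mul]
  refine Finset.sum_congr rfl fun i _ => ?_
  by_cases hs : s ∈ bar (a i) (b i) <;> simp [hs]

theorem integrable_barcodeDim_mul_exp_neg :
    Integrable fun s => (barcodeDim a b s : ℝ) * exp (-s) := by
  simp_rw [barcodeDim_mul_exp_neg]
  exact integrable_finsetSum _ fun i _ => integrable_indicator_bar_exp_neg (a i) (b i)

theorem sum_exp_sub_expE_eq_integral_barcodeDim (hab : ∀ i, (a i : WithTop ℝ) < b i) :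
    ∑ i, (exp (-(a i)) - expE (b i)) = ∫ s, (barcodeDim a b s : ℝ) * exp (-s) := by
  simp_rw [barcodeDim_mul_exp_neg]
  rw [integral_finsetSum _ fun i _ => integrable_indicator_bar_exp_neg (a i) (b i)]
  exact Finset.sum_congr rfl fun i _ => (integral_indicator_bar_exp_neg (hab i)).symm

variable (k : Type) [Field k]

instance (s : ℝ) : FiniteDimensional k ((barcodeMod k a b).V s) :=
  inferInstanceAs (FiniteDimensional k (∀ i, intervalSub k (a i) (b i) s))

theorem finrank_barcodeMod (s : ℝ) :
    Module.finrank k ((barcodeMod k a b).V s) = barcodeDim a b s := by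
  change Module.finrank k (∀ i, intervalSub k (a i) (b i) s) = _
  rw [Module.finrank_pi_fintype, barcodeDim, Finset.card_filter]
  exact Finset.sum_congr rfl fun i _ => finrank_intervalSub k (a i) (b i) s

end Barcode

theorem persistentMagnitude_additive_general
    (k : Type) [Field k] (M N P : PersMod k)
    (f : ∀ s : ℝ, M.V s →ₗ[k] N.V s) (g : ∀ s : ℝ, N.V s →ₗ[k] P.V s)
    (hinj : ∀ s : ℝ, Function.Injective (f s))
    (hexact : ∀ s : ℝ, LinearMap.range (f s) = LinearMap.ker (g s))
    (hsurj : ∀ s : ℝ, Function.Surjective (g s))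
    {m n p : ℕ}
    (aM : Fin m → ℝ) (bM : Fin m → WithTop ℝ) (habM : ∀ i, (aM i : WithTop ℝ) < bM i)
    (aN : Fin n → ℝ) (bN : Fin n → WithTop ℝ) (habN : ∀ j, (aN j : WithTop ℝ) < bN j)
    (aP : Fin p → ℝ) (bP : Fin p → WithTop ℝ) (habP : ∀ l, (aP l : WithTop ℝ) < bP l)
    (hisoM : PersIso M (barcodeMod k aM bM))
    (hisoN : PersIso N (barcodeMod k aN bN))
    (hisoP : PersIso P (barcodeMod k aP bP)) :
    ∑ j : Fin n, (Real.exp (-(aN j)) - expE (bN j)) =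
      (∑ i : Fin m, (Real.exp (-(aM i)) - expE (bM i))) +
      ∑ l : Fin p, (Real.exp (-(aP l)) - expE (bP l)) := by
  obtain ⟨eM, -⟩ := hisoM
  obtain ⟨eN, -⟩ := hisoN
  obtain ⟨eP, -⟩ := hisoP
  have hdim (s : ℝ) : barcodeDim aN bN s = barcodeDim aM bM s + barcodeDim aP bP s := by
    have := (eN s).symm.finiteDimensional
    rw [← finrank_barcodeMod _ _ k, ← finrank_barcodeMod _ _ k, ← finrank_barcodeMod _ _ k,
      ← (eM s).finrank_eq, ← (eN s).finrank_eq, ← (eP s).finrank_eq]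
    exact finrank_eq_add_of_shortExact (f s) (g s) (hinj s) (hexact s) (hsurj s)
  rw [sum_exp_sub_expE_eq_integral_barcodeDim aN bN habN,
    sum_exp_sub_expE_eq_integral_barcodeDim aM bM habM,
    sum_exp_sub_expE_eq_integral_barcodeDim aP bP habP,
    ← integral_add (integrable_barcodeDim_mul_exp_neg aM bM)
      (integrable_barcodeDim_mul_exp_neg aP bP)]
  congr 1 with s
  rw [hdim, Nat.cast_add, add_mul]

/-- persistent magnitude is additive with respect to short exact
sequences of (finitely presented) persistence modules: if `0 → M → N → P → 0` is
exact and `M ≅ ⊕ k[aM i, bM i)`, `N ≅ ⊕ k[aN j, bN j)`, `P ≅ ⊕ k[aP l, bP l)`,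
then `|N| = |M| + |P|`. -/
theorem persistentMagnitude_additive
    (k : Type) [Field k] (M N P : PersMod k)
    (f : ∀ s : ℝ, M.V s →ₗ[k] N.V s) (g : ∀ s : ℝ, N.V s →ₗ[k] P.V s)
    (hf_nat : ∀ (s s' : ℝ) (h : s ≤ s') (x : M.V s), f s' (M.map h x) = N.map h (f s x))
    (hg_nat : ∀ (s s' : ℝ) (h : s ≤ s') (x : N.V s), g s' (N.map h x) = P.map h (g s x))
    (hinj : ∀ s : ℝ, Function.Injective (f s))
    (hexact : ∀ s : ℝ, LinearMap.range (f s) = LinearMap.ker (g s))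
    (hsurj : ∀ s : ℝ, Function.Surjective (g s))
    {m n p : ℕ}
    (aM : Fin m → ℝ) (bM : Fin m → WithTop ℝ) (habM : ∀ i, (aM i : WithTop ℝ) < bM i)
    (aN : Fin n → ℝ) (bN : Fin n → WithTop ℝ) (habN : ∀ j, (aN j : WithTop ℝ) < bN j)
    (aP : Fin p → ℝ) (bP : Fin p → WithTop ℝ) (habP : ∀ l, (aP l : WithTop ℝ) < bP l)
    (hisoM : PersIso M (barcodeMod k aM bM))
    (hisoN : PersIso N (barcodeMod k aN bN))
    (hisoP : PersIso P (barcodeMod k aP bP)) :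
    ∑ j : Fin n, (Real.exp (-(aN j)) - expE (bN j)) =
      (∑ i : Fin m, (Real.exp (-(aM i)) - expE (bM i))) +
      ∑ l : Fin p, (Real.exp (-(aP l)) - expE (bP l)) :=
  persistentMagnitude_additive_general k M N P f g hinj hexact hsurj aM bM habM aN bN habN aP bP
    habP hisoM hisoN hisoP
end

section
/- Let (X,d) be a finite nonempty metric space and let 0 = d_0 < d_1 < ⋯ < d_n be an enumeration of the set {d(x,y) : x, y ∈ X} of all pairwise distances between elements of X. For 0 ≤ j ≤ n set χ_j = Σ (−1)^{#A−1}, the sum being over all nonempty subsets A ⊆ X with diam(A) ≤ d_j (so χ_j is the Euler characteristic of the Vietoris–Rips complex of X at scale d_j). Then for every t > 0, |tX|_Rips = Σ_{j=0}^{n−1} χ_j·(e^{−d_j·t} − e^{−d_{j+1}·t}) + χ_n·e^{−d_n·t}. -/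
open scoped BigOperators

/-- The Rips magnitude function of a finite subset `A` of a metric space:
`|tA|_Rips = Σ_{∅ ≠ B ⊆ A} (−1)^{#B−1} e^{−diam(B)·t}`. -/
noncomputable def ripsMag {Y : Type*} [MetricSpace Y] (A : Finset Y) (t : ℝ) : ℝ :=
  ∑ B ∈ A.powerset.filter (fun B => B.Nonempty),
    (-1 : ℝ) ^ (B.card - 1) * Real.exp (-(Metric.diam (B : Set Y)) * t)

open scoped Classical in
/-- The Euler characteristic of the Vietoris–Rips complex of a finite metric
space `X` at scale `r`: `Σ (−1)^{#A−1}` over nonempty subsets `A ⊆ X` with `diam A ≤ r`. -/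
noncomputable def ripsEuler (X : Type*) [MetricSpace X] [Fintype X] (r : ℝ) : ℝ :=
  ∑ B ∈ Finset.univ.powerset.filter
      (fun B : Finset X => B.Nonempty ∧ Metric.diam (B : Set X) ≤ r),
    (-1 : ℝ) ^ (B.card - 1)

private lemma tele_aux (f : ℕ → ℝ) : ∀ m n : ℕ, m ≤ n →
    ∑ j ∈ Finset.Ico m n, (f j - f (j + 1)) = f m - f n := by
  intro m n h
  induction n, h using Nat.le_induction with
  | base => simp
  | succ n hmn ih => rw [Finset.sum_Ico_succ_top hmn, ih]; ring

/-- if `0 = d 0 < d 1 < ⋯ < d n` enumerates the pairwise distances of a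
finite nonempty metric space `X`, then
`|tX|_Rips = Σ_{j=0}^{n−1} χ_j (e^{−d_j t} − e^{−d_{j+1} t}) + χ_n e^{−d_n t}`. -/
theorem ripsMag_eq_sum_euler
    (X : Type*) [MetricSpace X] [Fintype X] [Nonempty X]
    (n : ℕ) (d : ℕ → ℝ)
    (hd0 : d 0 = 0)
    (hmono : ∀ j, j < n → d j < d (j + 1))
    (hcover : ∀ x y : X, ∃ j ≤ n, dist x y = d j)
    (hattained : ∀ j ≤ n, ∃ x y : X, d j = dist x y)
    (t : ℝ) (ht : 0 < t) :
    ripsMag (Finset.univ : Finset X) t =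
      (∑ j ∈ Finset.range n,
        ripsEuler X (d j) * (Real.exp (-(d j) * t) - Real.exp (-(d (j + 1)) * t)))
      + ripsEuler X (d n) * Real.exp (-(d n) * t) := by
  classical
  set f : ℕ → ℝ := fun j => Real.exp (-(d j) * t) with hf
  -- monotonicity of d on [0, n]
  have hsm : ∀ i j, i ≤ j → j ≤ n → d i ≤ d j := by
    intro i j hij hjn
    induction j, hij using Nat.le_induction with
    | base => exact le_rfl
    | succ j hij ih =>
        exact (ih (by omega)).trans (hmono j (by omega)).le
  have hsm' : ∀ i j, i ≤ n → j ≤ n → (d i ≤ d j ↔ i ≤ j) := by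
    intro i j hi hj
    constructor
    · intro h
      by_contra hc
      push_neg at hc
      have h1 : d (j + 1) ≤ d i := hsm _ _ (by omega) hi
      have h2 : d j < d (j + 1) := hmono j (by omega)
      linarith
    · intro h; exact hsm _ _ h hj
  have hdn0 : 0 ≤ d n := hd0 ▸ hsm 0 n (Nat.zero_le n) le_rfl
  have hdiam_le : ∀ B : Finset X, Metric.diam (B : Set X) ≤ d n := by
    intro B
    refine Metric.diam_le_of_forall_dist_le hdn0 ?_
    intro x _ y _
    obtain ⟨j, hj, he⟩ := hcover x y
    rw [he]; exact hsm j n hj le_rfl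
  have hdiam_mem : ∀ B : Finset X, B.Nonempty →
      ∃ j ≤ n, Metric.diam (B : Set X) = d j := by
    intro B hB
    have hne : (B ×ˢ B).Nonempty := hB.product hB
    obtain ⟨p, hp, hpe⟩ :=
      Finset.exists_mem_eq_sup' hne (fun p : X × X => dist p.1 p.2)
    obtain ⟨j, hj, he⟩ := hcover p.1 p.2
    refine ⟨j, hj, ?_⟩
    rw [← he]
    apply le_antisymm
    · refine Metric.diam_le_of_forall_dist_le dist_nonneg ?_
      intro x hx y hy
      have hm : (x, y) ∈ B ×ˢ B := by
        simp only [Finset.mem_product]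
        exact ⟨hx, hy⟩
      have := Finset.le_sup' (fun p : X × X => dist p.1 p.2) hm
      rw [hpe] at this
      exact this
    · obtain ⟨hp1, hp2⟩ := Finset.mem_product.mp hp
      exact Metric.dist_le_diam_of_mem (B.finite_toSet.isBounded) hp1 hp2
  -- key per-subset identity
  have key : ∀ B : Finset X, B.Nonempty →
      (∑ j ∈ Finset.range n,
        (if Metric.diam (B : Set X) ≤ d j then (f j - f (j + 1)) else 0)) + f n
        = Real.exp (-(Metric.diam (B : Set X)) * t) := by
    intro B hB
    obtain ⟨jB, hjB, hdB⟩ := hdiam_mem B hB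
    have hcong : ∀ j ∈ Finset.range n,
        (if Metric.diam (B : Set X) ≤ d j then (f j - f (j + 1)) else 0)
          = if jB ≤ j then f j - f (j + 1) else 0 := by
      intro j hj
      rw [Finset.mem_range] at hj
      rw [hdB, if_congr (hsm' jB j hjB (by omega)) rfl rfl]
    rw [Finset.sum_congr rfl hcong, ← Finset.sum_filter]
    have hset : (Finset.range n).filter (fun j => jB ≤ j) = Finset.Ico jB n := by
      ext j; simp [Finset.mem_filter, Finset.mem_range, Finset.mem_Ico, and_comm]
    rw [hset, tele_aux f jB n hjB, hdB]
    simp [hf]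
  -- rewrite ripsEuler as a sum over all nonempty subsets with an `if`
  set S : Finset (Finset X) := Finset.univ.powerset.filter (fun B => B.Nonempty) with hS
  have hE : ∀ r : ℝ, ripsEuler X r
      = ∑ B ∈ S, (if Metric.diam (B : Set X) ≤ r then (-1 : ℝ) ^ (B.card - 1) else 0) := by
    intro r
    rw [ripsEuler, ← Finset.sum_filter, Finset.filter_filter]
  have hLHS : ripsMag (Finset.univ : Finset X) t
      = ∑ B ∈ S, (-1 : ℝ) ^ (B.card - 1) * Real.exp (-(Metric.diam (B : Set X)) * t) := by
    rw [ripsMag]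
  have hR : (∑ j ∈ Finset.range n,
        ripsEuler X (d j) * (Real.exp (-(d j) * t) - Real.exp (-(d (j + 1)) * t)))
      + ripsEuler X (d n) * Real.exp (-(d n) * t)
      = ∑ B ∈ S, (-1 : ℝ) ^ (B.card - 1) *
          ((∑ j ∈ Finset.range n,
            (if Metric.diam (B : Set X) ≤ d j then (f j - f (j + 1)) else 0)) + f n) := by
    simp only [hE, Finset.sum_mul]
    rw [Finset.sum_comm, ← Finset.sum_add_distrib]
    refine Finset.sum_congr rfl fun B _ => ?_
    rw [if_pos (hdiam_le B)]
    simp only [mul_add, Finset.mul_sum, mul_ite, mul_zero, ite_mul, zero_mul, hf]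
  rw [hLHS, hR]
  exact Finset.sum_congr rfl fun B hBS => by
    rw [key B (Finset.mem_filter.mp hBS).2]
end

section
/- Let A be a finite nonempty subset of the real line ℝ with its induced metric, with elements listed in increasing order a_1 < a_2 < ⋯ < a_n. Then for every t > 0, |tA|_Rips = n − Σ_{j=1}^{n−1} e^{−(a_{j+1} − a_j)·t}. -/
/-!
Adjoining a point `x` to `A` adds the terms `B = insert x C`, `C ⊆ A`. If some `y ∈ A` lies
between `x` and every other point, in the sense that adding `y` to `insert x C` never changes the
diameter when `C ≠ ∅`, then toggling `y` in `C` cancels all these terms except those for `C = ∅`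
and `C = {y}`, which contribute `1 - e^{-d(x,y) t}`. For points of `ℝ` added in increasing order,
`y` is the previous maximum, and the formula follows by induction.
-/

open scoped BigOperators

open Finset Metric

theorem Real.diam_insert_of_le_of_le {s : Set ℝ} (hs : Bornology.IsBounded s) {a b y : ℝ}
    (ha : a ∈ s) (hb : b ∈ s) (hay : a ≤ y) (hyb : y ≤ b) : diam (insert y s) = diam s := by
  have hinf : sInf s ≤ y := (csInf_le hs.bddBelow ha).trans hay
  have hsup : y ≤ sSup s := hyb.trans (le_csSup hs.bddAbove hb)
  have hsub : insert y s ⊆ Set.Icc (sInf s) (sSup s) :=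
    Set.insert_subset ⟨hinf, hsup⟩ fun z hz => ⟨csInf_le hs.bddBelow hz, le_csSup hs.bddAbove hz⟩
  refine le_antisymm ?_ (diam_mono (Set.subset_insert y s) (hs.insert y))
  calc diam (insert y s) ≤ diam (Set.Icc (sInf s) (sSup s)) := diam_mono hsub (isBounded_Icc _ _)
    _ = diam s := by rw [Real.diam_Icc (hinf.trans hsup), Real.diam_eq hs]

section MetricSpace

variable {Y : Type*} [MetricSpace Y]

theorem ripsMag_eq_one_sub (A : Finset Y) (t : ℝ) :
    ripsMag A t = 1 - ∑ B ∈ A.powerset, (-1 : ℝ) ^ #B * Real.exp (-diam (B : Set Y) * t) := by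
  classical
  have hempty : A.powerset.filter (fun B => ¬B.Nonempty) = {∅} := by
    simp [not_nonempty_iff_eq_empty, filter_eq']
  have hsign : ∀ B ∈ A.powerset.filter (fun B => B.Nonempty), (-1 : ℝ) ^ (#B - 1) = -(-1) ^ #B := by
    intro B hB
    obtain ⟨k, hk⟩ := Nat.exists_eq_add_one_of_ne_zero (card_pos.2 (mem_filter.1 hB).2).ne'
    rw [hk, pow_succ]
    simp
  rw [ripsMag, ← sum_filter_add_sum_filter_not A.powerset (fun B => B.Nonempty), hempty,
    sum_singleton, sum_congr rfl fun B hB => by rw [hsign B hB]]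
  simp [sum_neg_distrib]

theorem ripsMag_insert [DecidableEq Y] {A : Finset Y} {x : Y} (hx : x ∉ A) (t : ℝ) :
    ripsMag (insert x A) t = ripsMag A t +
      ∑ C ∈ A.powerset, (-1 : ℝ) ^ #C * Real.exp (-diam (insert x (C : Set Y)) * t) := by
  have hsign : ∀ C ∈ A.powerset, (-1 : ℝ) ^ #(insert x C) = -(-1) ^ #C := fun C hC => by
    rw [card_insert_of_notMem fun hxC => hx (mem_powerset.1 hC hxC), pow_succ, mul_neg_one]
  have hnew : ∑ C ∈ A.powerset,
      (-1 : ℝ) ^ #(insert x C) * Real.exp (-diam ((insert x C : Finset Y) : Set Y) * t) =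
      -∑ C ∈ A.powerset, (-1 : ℝ) ^ #C * Real.exp (-diam (insert x (C : Set Y)) * t) := by
    rw [← sum_neg_distrib]
    refine sum_congr rfl fun C hC => ?_
    rw [hsign C hC, coe_insert, neg_mul]
  rw [ripsMag_eq_one_sub, ripsMag_eq_one_sub, sum_powerset_insert hx, hnew]
  ring

theorem ripsMag_singleton (x : Y) (t : ℝ) : ripsMag {x} t = 1 := by
  classical
  simpa [ripsMag_eq_one_sub] using ripsMag_insert (notMem_empty x) t

theorem ripsMag_insert_of_diam_insert_insert [DecidableEq Y] {A : Finset Y} {x y : Y}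
    (hx : x ∉ A) (hy : y ∈ A)
    (hdiam : ∀ C ⊆ A.erase y, C.Nonempty →
      diam (insert y (insert x (C : Set Y))) = diam (insert x (C : Set Y))) (t : ℝ) :
    ripsMag (insert x A) t = ripsMag A t + 1 - Real.exp (-dist x y * t) := by
  have hsum : ∑ C ∈ A.powerset, (-1 : ℝ) ^ #C * Real.exp (-diam (insert x (C : Set Y)) * t) =
      1 - Real.exp (-dist x y * t) := by
    rw [← insert_erase hy, sum_powerset_insert (notMem_erase y A), ← sum_add_distrib,
      sum_eq_single ∅]
    · simp [diam_pair, sub_eq_add_neg]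
    · intro C hC hne
      rw [card_insert_of_notMem fun hyC => notMem_erase y A (mem_powerset.1 hC hyC), coe_insert,
        Set.insert_comm x y, hdiam C (mem_powerset.1 hC) (nonempty_iff_ne_empty.2 hne)]
      ring
    · exact fun h => absurd (empty_mem_powerset _) h
  rw [ripsMag_insert hx, hsum]
  ring

end MetricSpace

theorem ripsMag_insert_of_forall_le {A : Finset ℝ} {x y : ℝ} (hy : y ∈ A) (hA : ∀ z ∈ A, z ≤ y)
    (hyx : y < x) (t : ℝ) :
    ripsMag (insert x A) t = ripsMag A t + 1 - Real.exp (-(x - y) * t) := by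
  have hx : x ∉ A := fun hxA => (hA x hxA).not_gt hyx
  rw [ripsMag_insert_of_diam_insert_insert hx hy ?_ t, Real.dist_eq, abs_of_pos (sub_pos.2 hyx)]
  rintro C hC ⟨c, hc⟩
  exact Real.diam_insert_of_le_of_le (C.finite_toSet.insert x).isBounded
    (Set.mem_insert_of_mem x hc) (Set.mem_insert x _) (hA c (mem_of_mem_erase (hC hc))) hyx.le

theorem ripsMag_finset_real_general
    (n : ℕ) (a : ℕ → ℝ)
    (ha : ∀ j, j + 1 < n → a j < a (j + 1))
    (t : ℝ) :
    ripsMag ((Finset.range n).image a) t =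
      (n : ℝ) - ∑ j ∈ Finset.range (n - 1), Real.exp (-(a (j + 1) - a j) * t) := by
  induction n with
  | zero => simp [ripsMag_eq_one_sub]
  | succ n ih =>
    rcases n with _ | m
    · simp [ripsMag_singleton]
    · have hmono : StrictMonoOn a (Set.Iic (m + 1)) :=
        strictMonoOn_Iic_of_lt_succ fun k hk => by simpa using ha k (by omega)
      have hmax : ∀ z ∈ (range (m + 1)).image a, z ≤ a m := forall_mem_image.2 fun j hj => by
        have hjm : j ≤ m := Nat.lt_succ_iff.1 (mem_range.1 hj)
        exact hmono.monotoneOn (Set.mem_Iic.2 (by omega)) (Set.mem_Iic.2 (by omega)) hjm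
      have hstep := ripsMag_insert_of_forall_le (mem_image_of_mem a (self_mem_range_succ m)) hmax
        (ha m (by omega)) t
      rw [range_add_one, image_insert, hstep, ih fun j hj => ha j (by omega)]
      simp only [Nat.add_sub_cancel, sum_range_succ]
      push_cast
      ring

/-- for a finite nonempty subset `{a 0 < a 1 < ⋯ < a (n−1)}` of ℝ,
`|tA|_Rips = n − Σ_{j=1}^{n−1} e^{−(a_{j+1} − a_j) t}`. -/
theorem ripsMag_finset_real
    (n : ℕ) (hn : 1 ≤ n) (a : ℕ → ℝ)
    (ha : ∀ j, j + 1 < n → a j < a (j + 1))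
    (t : ℝ) (ht : 0 < t) :
    ripsMag ((Finset.range n).image a) t =
      (n : ℝ) - ∑ j ∈ Finset.range (n - 1), Real.exp (-(a (j + 1) - a j) * t) :=
  ripsMag_finset_real_general n a ha t
end
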